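/- arXiv:1603.00860 — 2 statements merged into one kernel-verified Lean document; each statement's English description precedes it below -/
import Mathlib

section
/- In the abstract canonical height setting (d ≥ 2, integers N > t, degree function D with D(F^n(X)) ≥ d^(N−t)·D(F^{n−1}(X)) replaced by the bound D_{i−1}/D_i ≤ d^{-(N−t)} wherever used, and |h(F(X)) − d·(D(F(X))/D(X))·h(X)| ≤ C·D(X)), the canonical height satisfies |ĥ(X) − h(X)| ≤ C·D(X)/((d−1)·d^(N−t−1)). -/
open Filter

/-- In the abstract canonical height setting (`d ≥ 2`, `N > t`, degrees with
`D_{i-1}/D_i ≤ 1/d^(N-t)`, and `|h(F X) − d · (Dg(F X)/Dg X) · h X| ≤ C · Dg X`), the canonical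
height satisfies `|ĥ(X) − h(X)| ≤ C · Dg(X) / ((d − 1) · d^(N−t−1))`. -/
theorem canonical_height_minus_height_bound
    {V : Type*} (F : V → V) (Dg : V → ℕ) (h hhat : V → ℝ) (d N t : ℕ) (C : ℝ)
    (hd : 2 ≤ d) (htN : t < N) (hC : 0 ≤ C)
    (hDpos : ∀ X, 1 ≤ Dg X)
    (hh : ∀ X, 0 ≤ h X)
    (hDratio : ∀ X, (Dg X : ℝ) / (Dg (F X) : ℝ) ≤ 1 / (d : ℝ) ^ (N - t))
    (hFh : ∀ X, |h (F X) - d * ((Dg (F X) : ℝ) / (Dg X : ℝ)) * h X| ≤ C * Dg X)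
    (hlim : ∀ X, Tendsto (fun n : ℕ =>
      ((Dg X : ℝ) / (Dg (F^[n] X) : ℝ)) * h (F^[n] X) / (d : ℝ) ^ n) atTop (nhds (hhat X)))
    (X : V) :
    |hhat X - h X| ≤ C * (Dg X : ℝ) / (((d : ℝ) - 1) * (d : ℝ) ^ (N - t - 1)) := by
  have hd1 : (1:ℝ) < (d:ℝ) := by
    have : (2:ℝ) ≤ (d:ℝ) := by exact_mod_cast hd
    linarith
  have hd0 : (0:ℝ) < (d:ℝ) := by linarith
  have hdm1 : (0:ℝ) < (d:ℝ) - 1 := by linarith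
  have Dpos : ∀ Y, (0:ℝ) < (Dg Y : ℝ) := fun Y => by exact_mod_cast hDpos Y
  set a : ℕ → ℝ := fun n => ((Dg X : ℝ) / (Dg (F^[n] X) : ℝ)) * h (F^[n] X) / (d:ℝ)^n with ha
  set K : ℝ := C * (Dg X : ℝ) / (d:ℝ)^(N - t) with hK
  have hK0 : 0 ≤ K := by positivity
  have step : ∀ n, |a (n+1) - a n| ≤ K * (1/(d:ℝ))^(n+1) := by
    intro n
    set Y := F^[n] X with hYdef
    have hY1 : F^[n+1] X = F Y := Function.iterate_succ_apply' F n X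
    have h1 : (Dg Y : ℝ) ≠ 0 := (Dpos Y).ne'
    have h2 : (Dg (F Y) : ℝ) ≠ 0 := (Dpos (F Y)).ne'
    have hE : a (n+1) - a n =
        ((Dg X : ℝ) / ((Dg (F Y):ℝ) * (d:ℝ)^(n+1))) *
          (h (F Y) - (d:ℝ) * ((Dg (F Y):ℝ)/(Dg Y:ℝ)) * h Y) := by
      simp only [ha, hY1, ← hYdef]
      field_simp
      ring
    rw [hE, abs_mul,
      abs_of_nonneg (show (0:ℝ) ≤ (Dg X : ℝ) / ((Dg (F Y):ℝ) * (d:ℝ)^(n+1)) by positivity)]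
    have hb := hFh Y
    have hchain : (Dg X : ℝ) / ((Dg (F Y):ℝ) * (d:ℝ)^(n+1)) *
        |h (F Y) - (d:ℝ) * ((Dg (F Y):ℝ)/(Dg Y:ℝ)) * h Y| ≤
        (Dg X : ℝ) / ((Dg (F Y):ℝ) * (d:ℝ)^(n+1)) * (C * (Dg Y:ℝ)) := by
      apply mul_le_mul_of_nonneg_left hb (by positivity)
    refine hchain.trans ?_
    have heq : (Dg X : ℝ) / ((Dg (F Y):ℝ) * (d:ℝ)^(n+1)) * (C * (Dg Y:ℝ)) =
        C * (Dg X:ℝ) * ((Dg Y:ℝ)/(Dg (F Y):ℝ)) * (1/(d:ℝ))^(n+1) := by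
      field_simp
      rw [one_div_pow]; field_simp [hd0.ne']
    rw [heq]
    have hr := hDratio Y
    have : C * (Dg X:ℝ) * ((Dg Y:ℝ)/(Dg (F Y):ℝ)) * (1/(d:ℝ))^(n+1) ≤
        C * (Dg X:ℝ) * (1/(d:ℝ)^(N-t)) * (1/(d:ℝ))^(n+1) := by
      apply mul_le_mul_of_nonneg_right _ (by positivity)
      apply mul_le_mul_of_nonneg_left hr (by positivity)
    refine this.trans (le_of_eq ?_)
    rw [hK]; ring
  have main : ∀ n, |a n - a 0| ≤ K/((d:ℝ)-1) * (1 - (1/(d:ℝ))^n) := by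
    intro n
    induction n with
    | zero => simp
    | succ n ih =>
      have hs := step n
      have tri : |a (n+1) - a 0| ≤ |a (n+1) - a n| + |a n - a 0| :=
        abs_sub_le (a (n+1)) (a n) (a 0)
      have hp : (1/(d:ℝ))^(n+1) = (1/(d:ℝ))^n * (1/(d:ℝ)) := pow_succ _ _
      have key : K * (1/(d:ℝ))^(n+1) + K/((d:ℝ)-1) * (1 - (1/(d:ℝ))^n) =
          K/((d:ℝ)-1) * (1 - (1/(d:ℝ))^(n+1)) := by
        rw [hp]; field_simp; ring
      linarith
  have ha0 : a 0 = h X := by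
    simp [ha, div_self (Dpos X).ne']
  have hlimX : Tendsto (fun n => |a n - a 0|) atTop (nhds (|hhat X - a 0|)) :=
    ((hlim X).sub_const (a 0)).abs
  have hbound : |hhat X - a 0| ≤ K/((d:ℝ)-1) := by
    apply le_of_tendsto hlimX
    filter_upwards with n
    refine (main n).trans ?_
    have hrn : (0:ℝ) ≤ (1/(d:ℝ))^n := by positivity
    nlinarith [div_nonneg hK0 hdm1.le]
  rw [ha0] at hbound
  refine hbound.trans ?_
  have hKe : K/((d:ℝ)-1) = C * (Dg X:ℝ) / (((d:ℝ)-1) * (d:ℝ)^(N-t)) := by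
    rw [hK, div_div, mul_comm ((d:ℝ)^(N-t)) ((d:ℝ)-1)]
  rw [hKe]
  apply div_le_div_of_nonneg_left (by positivity) (by positivity)
  exact mul_le_mul_of_nonneg_left (pow_le_pow_right₀ hd1.le (Nat.sub_le _ _)) hdm1.le
end

section
/- For the morphism f: P^2(F_2) → P^2(F_2) given by f(x,y,z) = (z², y² + xz + z², x²), the subvariety cycle V(y+z) → V(y² + xz) → V(x+y) → V(x² + y² + xz + z²) → V(y+z) holds: f(V(y+z)) = V(y²+xz), f(V(y²+xz)) = V(x+y), f(V(x+y)) = V(x²+y²+xz+z²), and f(V(x²+y²+xz+z²)) = V(y+z). In particular, a periodic orbit of subvarieties can contain subvarieties of different degrees (here degrees 1 and 2 alternate). -/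
open MvPolynomial

noncomputable section

/-- Points of `ℙ²` over the algebraic closure of `F₂`. -/
abbrev P2F2bar := Projectivization (AlgebraicClosure (ZMod 2)) (Fin 3 → AlgebraicClosure (ZMod 2))

/-- The zero locus in `ℙ²` of a homogeneous polynomial. -/
def zLocus (g : MvPolynomial (Fin 3) (AlgebraicClosure (ZMod 2))) : Set P2F2bar :=
  {p | ∀ v : Fin 3 → AlgebraicClosure (ZMod 2), ∀ hv : v ≠ 0,
    Projectivization.mk _ v hv = p → eval v g = 0}

/-- The forward image of a subset of `ℙ²` under the rational map given by a tuple `f`. -/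
def fwdImage (f : Fin 3 → MvPolynomial (Fin 3) (AlgebraicClosure (ZMod 2))) (S : Set P2F2bar) :
    Set P2F2bar :=
  {P | ∃ (v : Fin 3 → AlgebraicClosure (ZMod 2)) (hv : v ≠ 0),
    Projectivization.mk _ v hv ∈ S ∧
    ∃ hw : (fun i => eval v (f i)) ≠ 0, P = Projectivization.mk _ (fun i => eval v (f i)) hw}

abbrev K := AlgebraicClosure (ZMod 2)

def sqrtK (a : K) : K := (frobeniusEquiv K 2).symm a

lemma sqrtK_sq (a : K) : sqrtK a ^ 2 = a := by
  have := (frobeniusEquiv K 2).apply_symm_apply a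
  simpa [frobeniusEquiv_apply, frobenius_def, sqrtK] using this

lemma sq_sqrtK (a : K) : sqrtK (a ^ 2) = a := by
  have := (frobeniusEquiv K 2).symm_apply_apply a
  simpa [frobeniusEquiv_apply, frobenius_def, sqrtK] using this

lemma sqrtK_mul (a b : K) : sqrtK (a * b) = sqrtK a * sqrtK b := by
  simp [sqrtK, map_mul]

lemma sqrtK_eq_zero {a : K} (h : sqrtK a = 0) : a = 0 := by
  have : a = sqrtK a ^ 2 := (sqrtK_sq a).symm
  rw [this, h]; ring

lemma sq_injK {a b : K} (h : a ^ 2 = b ^ 2) : a = b := by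
  have := congrArg sqrtK h
  rwa [sq_sqrtK, sq_sqrtK] at this

lemma h2K : (2 : K) = 0 := CharTwo.two_eq_zero

lemma vec3_eq_zero {v : Fin 3 → K} (h0 : v 0 = 0) (h1 : v 1 = 0) (h2 : v 2 = 0) : v = 0 := by
  funext i; fin_cases i <;> assumption

lemma mem_zLocus_iff (g : MvPolynomial (Fin 3) K) (d : ℕ)
    (hg : ∀ (c : K) (v : Fin 3 → K), eval (fun i => c * v i) g = c ^ d * eval v g)
    (v : Fin 3 → K) (hv : v ≠ 0) :
    Projectivization.mk K v hv ∈ zLocus g ↔ eval v g = 0 := by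
  constructor
  · intro h; exact h v hv rfl
  · intro h u hu hmk
    rw [Projectivization.mk_eq_mk_iff] at hmk
    obtain ⟨a, ha⟩ := hmk
    have hu' : u = fun i => (a : K) * v i := by
      funext i; rw [← ha]; simp [Units.smul_def, Pi.smul_apply]
    rw [hu', hg, h, mul_zero]

def Fm : Fin 3 → MvPolynomial (Fin 3) K :=
  ![(X 2) ^ 2, (X 1) ^ 2 + X 0 * X 2 + (X 2) ^ 2, (X 0) ^ 2]
def G1 : MvPolynomial (Fin 3) K := X 1 + X 2
def G2 : MvPolynomial (Fin 3) K := (X 1) ^ 2 + X 0 * X 2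
def G3 : MvPolynomial (Fin 3) K := X 0 + X 1
def G4 : MvPolynomial (Fin 3) K := (X 0) ^ 2 + (X 1) ^ 2 + X 0 * X 2 + (X 2) ^ 2

theorem main :
    (∀ v : Fin 3 → K, v ≠ 0 → (fun i => eval v (Fm i)) ≠ 0) ∧
    fwdImage Fm (zLocus G1) = zLocus G2 ∧
    fwdImage Fm (zLocus G2) = zLocus G3 ∧
    fwdImage Fm (zLocus G3) = zLocus G4 ∧
    fwdImage Fm (zLocus G4) = zLocus G1 := by
  have hf0 : ∀ v : Fin 3 → K, eval v (Fm 0) = v 2 ^ 2 := by intro v; simp [Fm]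
  have hf1 : ∀ v : Fin 3 → K, eval v (Fm 1) = v 1 ^ 2 + v 0 * v 2 + v 2 ^ 2 := by
    intro v; simp [Fm]
  have hf2 : ∀ v : Fin 3 → K, eval v (Fm 2) = v 0 ^ 2 := by intro v; simp [Fm]
  have hg1 : ∀ (v : Fin 3 → K) (hv : v ≠ 0),
      Projectivization.mk K v hv ∈ zLocus G1 ↔ v 1 + v 2 = 0 := by
    intro v hv
    have := mem_zLocus_iff G1 1 (by intro c v; simp [G1]; ring) v hv
    simpa [G1] using this
  have hg2 : ∀ (v : Fin 3 → K) (hv : v ≠ 0),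
      Projectivization.mk K v hv ∈ zLocus G2 ↔ v 1 ^ 2 + v 0 * v 2 = 0 := by
    intro v hv
    have := mem_zLocus_iff G2 2 (by intro c v; simp [G2]; ring) v hv
    simpa [G2] using this
  have hg3 : ∀ (v : Fin 3 → K) (hv : v ≠ 0),
      Projectivization.mk K v hv ∈ zLocus G3 ↔ v 0 + v 1 = 0 := by
    intro v hv
    have := mem_zLocus_iff G3 1 (by intro c v; simp [G3]; ring) v hv
    simpa [G3] using this
  have hg4 : ∀ (v : Fin 3 → K) (hv : v ≠ 0),
      Projectivization.mk K v hv ∈ zLocus G4 ↔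
        v 0 ^ 2 + v 1 ^ 2 + v 0 * v 2 + v 2 ^ 2 = 0 := by
    intro v hv
    have := mem_zLocus_iff G4 2 (by intro c v; simp [G4]; ring) v hv
    simpa [G4] using this
  have hnv : ∀ v : Fin 3 → K, v ≠ 0 → (fun i => eval v (Fm i)) ≠ 0 := by
    intro v hv h
    have h0 : v 2 ^ 2 = 0 := by have := congrFun h 0; rwa [hf0] at this
    have h2 : v 0 ^ 2 = 0 := by have := congrFun h 2; rwa [hf2] at this
    have hv2 : v 2 = 0 := pow_eq_zero_iff (n := 2) (by norm_num) |>.mp h0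
    have hv0 : v 0 = 0 := pow_eq_zero_iff (n := 2) (by norm_num) |>.mp h2
    have h1 : v 1 ^ 2 + v 0 * v 2 + v 2 ^ 2 = 0 := by
      have := congrFun h 1; rwa [hf1] at this
    rw [hv0, hv2] at h1
    have hv1 : v 1 = 0 := by
      have h1' : v 1 ^ 2 = 0 := by linear_combination h1
      exact pow_eq_zero_iff (n := 2) (by norm_num) |>.mp h1'
    exact hv (vec3_eq_zero hv0 hv1 hv2)
  refine ⟨hnv, ?_, ?_, ?_, ?_⟩
  · -- f(V(g1)) = V(g2)
    ext P
    constructor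
    · rintro ⟨v, hv, hmem, hw, rfl⟩
      have h : v 1 + v 2 = 0 := (hg1 v hv).mp hmem
      rw [hg2 _ hw, hf0, hf1, hf2]
      have hv2 : v 2 = v 1 := by linear_combination h - v 1 * h2K
      rw [hv2]
      linear_combination (2 * v 1 ^ 4 + 2 * v 0 * v 1 ^ 3 + v 0 ^ 2 * v 1 ^ 2) * h2K
    · intro hP
      induction P using Projectivization.ind with
      | h u hu =>
        have h : u 1 ^ 2 + u 0 * u 2 = 0 := (hg2 u hu).mp hP
        have hsq : u 0 * u 2 = u 1 ^ 2 := by linear_combination h - u 1 ^ 2 * h2K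
        set v : Fin 3 → K := ![sqrtK (u 2), sqrtK (u 0), sqrtK (u 0)] with hvdef
        have hv0 : v 0 = sqrtK (u 2) := rfl
        have hv1 : v 1 = sqrtK (u 0) := rfl
        have hv2 : v 2 = sqrtK (u 0) := rfl
        have hvne : v ≠ 0 := by
          intro h0
          apply hu
          have e2 : u 2 = 0 := sqrtK_eq_zero (by rw [← hv0, h0]; rfl)
          have e0 : u 0 = 0 := sqrtK_eq_zero (by rw [← hv1, h0]; rfl)
          have e1 : u 1 = 0 := by
            have h1' : u 1 ^ 2 = 0 := by rw [← hsq, e0]; ring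
            exact pow_eq_zero_iff (n := 2) (by norm_num) |>.mp h1'
          exact vec3_eq_zero e0 e1 e2
        refine ⟨v, hvne, (hg1 v hvne).mpr ?_, hnv v hvne, ?_⟩
        · rw [hv1, hv2]; exact CharTwo.add_self_eq_zero _
        · have key : (fun i => eval v (Fm i)) = u := by
            funext i
            fin_cases i
            · show eval v (Fm 0) = u 0
              rw [hf0, hv2, sqrtK_sq]
            · show eval v (Fm 1) = u 1
              rw [hf1, hv0, hv1, hv2, sqrtK_sq]
              have hk : sqrtK (u 2) * sqrtK (u 0) = u 1 := by
                rw [← sqrtK_mul, mul_comm, hsq, sq_sqrtK]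
              linear_combination hk + u 0 * h2K
            · show eval v (Fm 2) = u 2
              rw [hf2, hv0, sqrtK_sq]
          rw [Projectivization.mk_eq_mk_iff]
          exact ⟨1, by rw [one_smul, key]⟩
  · -- f(V(g2)) = V(g3)
    ext P
    constructor
    · rintro ⟨v, hv, hmem, hw, rfl⟩
      have h : v 1 ^ 2 + v 0 * v 2 = 0 := (hg2 v hv).mp hmem
      rw [hg3 _ hw, hf0, hf1]
      linear_combination h + v 2 ^ 2 * h2K
    · intro hP
      induction P using Projectivization.ind with
      | h u hu =>
        have h : u 0 + u 1 = 0 := (hg3 u hu).mp hP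
        have hu1 : u 1 = u 0 := by linear_combination h - u 0 * h2K
        set v : Fin 3 → K := ![sqrtK (u 2), sqrtK (sqrtK (u 2) * sqrtK (u 0)), sqrtK (u 0)]
          with hvdef
        have hv0 : v 0 = sqrtK (u 2) := rfl
        have hv1 : v 1 = sqrtK (sqrtK (u 2) * sqrtK (u 0)) := rfl
        have hv2 : v 2 = sqrtK (u 0) := rfl
        have hvne : v ≠ 0 := by
          intro h0
          apply hu
          have e2 : u 2 = 0 := sqrtK_eq_zero (by rw [← hv0, h0]; rfl)
          have e0 : u 0 = 0 := sqrtK_eq_zero (by rw [← hv2, h0]; rfl)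
          exact vec3_eq_zero e0 (by rw [hu1, e0]) e2
        have hmid : v 1 ^ 2 = v 0 * v 2 := by rw [hv1, sqrtK_sq, hv0, hv2]
        refine ⟨v, hvne, (hg2 v hvne).mpr ?_, hnv v hvne, ?_⟩
        · rw [hmid]; linear_combination v 0 * v 2 * h2K
        · have key : (fun i => eval v (Fm i)) = u := by
            funext i
            fin_cases i
            · show eval v (Fm 0) = u 0
              rw [hf0, hv2, sqrtK_sq]
            · show eval v (Fm 1) = u 1
              rw [hf1, hmid, hv2, sqrtK_sq, hu1]
              linear_combination v 0 * v 2 * h2K - 2 * v 0 * hv2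
            · show eval v (Fm 2) = u 2
              rw [hf2, hv0, sqrtK_sq]
          rw [Projectivization.mk_eq_mk_iff]
          exact ⟨1, by rw [one_smul, key]⟩
  · -- f(V(g3)) = V(g4)
    ext P
    constructor
    · rintro ⟨v, hv, hmem, hw, rfl⟩
      have h : v 0 + v 1 = 0 := (hg3 v hv).mp hmem
      rw [hg4 _ hw, hf0, hf1, hf2]
      have hv1 : v 1 = v 0 := by linear_combination h - v 0 * h2K
      rw [hv1]
      linear_combination (v 2 ^ 4 + v 0 ^ 4 + 2 * v 0 ^ 2 * v 2 ^ 2 + v 0 ^ 3 * v 2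
        + v 0 * v 2 ^ 3) * h2K
    · intro hP
      induction P using Projectivization.ind with
      | h u hu =>
        have h : u 0 ^ 2 + u 1 ^ 2 + u 0 * u 2 + u 2 ^ 2 = 0 := (hg4 u hu).mp hP
        set v : Fin 3 → K := ![sqrtK (u 2), sqrtK (u 2), sqrtK (u 0)] with hvdef
        have hv0 : v 0 = sqrtK (u 2) := rfl
        have hv1 : v 1 = sqrtK (u 2) := rfl
        have hv2 : v 2 = sqrtK (u 0) := rfl
        have hvne : v ≠ 0 := by
          intro h0
          apply hu
          have e2 : u 2 = 0 := sqrtK_eq_zero (by rw [← hv0, h0]; rfl)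
          have e0 : u 0 = 0 := sqrtK_eq_zero (by rw [← hv2, h0]; rfl)
          have e1 : u 1 = 0 := by
            have h1' : u 1 ^ 2 = 0 := by rw [e0, e2] at h; linear_combination h
            exact pow_eq_zero_iff (n := 2) (by norm_num) |>.mp h1'
          exact vec3_eq_zero e0 e1 e2
        refine ⟨v, hvne, (hg3 v hvne).mpr ?_, hnv v hvne, ?_⟩
        · rw [hv0, hv1]; exact CharTwo.add_self_eq_zero _
        · have key : (fun i => eval v (Fm i)) = u := by
            funext i
            fin_cases i
            · show eval v (Fm 0) = u 0
              rw [hf0, hv2, sqrtK_sq]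
            · show eval v (Fm 1) = u 1
              rw [hf1, hv0, hv1, hv2, sqrtK_sq, sqrtK_sq]
              apply sq_injK
              rw [CharTwo.add_sq, CharTwo.add_sq, mul_pow, sqrtK_sq, sqrtK_sq]
              linear_combination h - u 1 ^ 2 * h2K
            · show eval v (Fm 2) = u 2
              rw [hf2, hv0, sqrtK_sq]
          rw [Projectivization.mk_eq_mk_iff]
          exact ⟨1, by rw [one_smul, key]⟩
  · -- f(V(g4)) = V(g1)
    ext P
    constructor
    · rintro ⟨v, hv, hmem, hw, rfl⟩
      have h : v 0 ^ 2 + v 1 ^ 2 + v 0 * v 2 + v 2 ^ 2 = 0 := (hg4 v hv).mp hmem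
      rw [hg1 _ hw, hf1, hf2]
      linear_combination h
    · intro hP
      induction P using Projectivization.ind with
      | h u hu =>
        have h : u 1 + u 2 = 0 := (hg1 u hu).mp hP
        have hu2 : u 2 = u 1 := by linear_combination h - u 1 * h2K
        set v : Fin 3 → K :=
          ![sqrtK (u 2), sqrtK (u 2 + sqrtK (u 2) * sqrtK (u 0) + u 0), sqrtK (u 0)] with hvdef
        have hv0 : v 0 = sqrtK (u 2) := rfl
        have hv1 : v 1 = sqrtK (u 2 + sqrtK (u 2) * sqrtK (u 0) + u 0) := rfl
        have hv2 : v 2 = sqrtK (u 0) := rfl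
        have hvne : v ≠ 0 := by
          intro h0
          apply hu
          have e2 : u 2 = 0 := sqrtK_eq_zero (by rw [← hv0, h0]; rfl)
          have e0 : u 0 = 0 := sqrtK_eq_zero (by rw [← hv2, h0]; rfl)
          have e1 : u 1 = 0 := by rw [← hu2, e2]
          exact vec3_eq_zero e0 e1 e2
        have hmid : v 1 ^ 2 = u 2 + v 0 * v 2 + u 0 := by
          rw [hv1, sqrtK_sq, hv0, hv2]
        refine ⟨v, hvne, (hg4 v hvne).mpr ?_, hnv v hvne, ?_⟩
        · rw [hmid, hv0, hv2, sqrtK_sq, sqrtK_sq]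
          linear_combination (u 2 + sqrtK (u 2) * sqrtK (u 0) + u 0) * h2K
        · have key : (fun i => eval v (Fm i)) = u := by
            funext i
            fin_cases i
            · show eval v (Fm 0) = u 0
              rw [hf0, hv2, sqrtK_sq]
            · show eval v (Fm 1) = u 1
              rw [hf1, hmid, hv2, sqrtK_sq, hu2]
              linear_combination (v 0 * v 2 + u 0) * h2K - 2 * v 0 * hv2
            · show eval v (Fm 2) = u 2
              rw [hf2, hv0, sqrtK_sq]
          rw [Projectivization.mk_eq_mk_iff]
          exact ⟨1, by rw [one_smul, key]⟩

/-- For the morphism `f(x,y,z) = (z², y² + xz + z², x²)` of `ℙ²` over `F₂`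
(viewed on geometric points), the 4-cycle of subvarieties
`V(y+z) → V(y²+xz) → V(x+y) → V(x²+y²+xz+z²) → V(y+z)` holds:
`f(V(y+z)) = V(y²+xz)`, `f(V(y²+xz)) = V(x+y)`, `f(V(x+y)) = V(x²+y²+xz+z²)`, and
`f(V(x²+y²+xz+z²)) = V(y+z)`. In particular a periodic orbit of subvarieties can contain
subvarieties of different degrees (degrees 1 and 2 alternate). -/
theorem orbit_with_alternating_degrees :
    letI f : Fin 3 → MvPolynomial (Fin 3) (AlgebraicClosure (ZMod 2)) :=
      ![(X 2) ^ 2, (X 1) ^ 2 + X 0 * X 2 + (X 2) ^ 2, (X 0) ^ 2]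
    letI g1 : MvPolynomial (Fin 3) (AlgebraicClosure (ZMod 2)) := X 1 + X 2
    letI g2 : MvPolynomial (Fin 3) (AlgebraicClosure (ZMod 2)) := (X 1) ^ 2 + X 0 * X 2
    letI g3 : MvPolynomial (Fin 3) (AlgebraicClosure (ZMod 2)) := X 0 + X 1
    letI g4 : MvPolynomial (Fin 3) (AlgebraicClosure (ZMod 2)) :=
      (X 0) ^ 2 + (X 1) ^ 2 + X 0 * X 2 + (X 2) ^ 2
    (∀ v : Fin 3 → AlgebraicClosure (ZMod 2), v ≠ 0 → (fun i => eval v (f i)) ≠ 0) ∧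
    fwdImage f (zLocus g1) = zLocus g2 ∧
    fwdImage f (zLocus g2) = zLocus g3 ∧
    fwdImage f (zLocus g3) = zLocus g4 ∧
    fwdImage f (zLocus g4) = zLocus g1 := main

end
end
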